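/- A finite set B of Wang tiles admits no tiling of the plane if and only if for some m ≥ 1 the vertical transition matrix V_m is nilpotent. -/

import Mathlib

structure WangTile (p : ℕ) where
  t : Fin p
  b : Fin p
  l : Fin p
  r : Fin p
deriving DecidableEq, Fintype

def IsTiling {p : ℕ} (B : Set (WangTile p)) (f : ℤ → ℤ → WangTile p) : Prop :=
  (∀ i j, f i j ∈ B) ∧ (∀ i j, (f i j).r = (f (i + 1) j).l) ∧
    (∀ i j, (f i j).t = (f i (j + 1)).b)

def IsPeriodic {p : ℕ} (f : ℤ → ℤ → WangTile p) : Prop :=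
  ∃ m n : ℕ, 1 ≤ m ∧ 1 ≤ n ∧ ∀ i j : ℤ, f (i + (m : ℤ)) j = f i j ∧ f i (j + (n : ℤ)) = f i j

/-- Vertically-valid columns of `m` tiles of `B` (no wrap-around). -/
abbrev ColB (p m : ℕ) (B : Finset (WangTile p)) : Type :=
  {c : Fin m → WangTile p // (∀ k, c k ∈ B) ∧
    ∀ k l : Fin m, (l : ℕ) = (k : ℕ) + 1 → (c k).t = (c l).b}

/-- The vertical transition matrix of order `m`. -/
def Vmat (p m : ℕ) (B : Finset (WangTile p)) : Matrix (ColB p m B) (ColB p m B) ℝ :=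
  Matrix.of fun u v => if ∀ k : Fin m, (u.1 k).r = (v.1 k).l then 1 else 0

/-!
A tiling of the plane restricts, on the strip `ℤ × [0, m)`, to a bi-infinite walk in the
graph of horizontally compatible columns of height `m`; so `V_m` has walks of every length
and no power of it vanishes. Conversely, entries of `V_m ^ k` are nonzero exactly along walks of
length `k`, i.e. along valid `m × (k + 1)` rectangles. If no `V_m` is nilpotent, there are valid
rectangles of every size; centring them, every box `[-N, N]²` can be tiled, and compactness of
`ℤ → ℤ → WangTile p` (König's lemma) turns these into a tiling of the plane.
-/

open Matrix

section RelMatrix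

variable {α : Type*} (R : α → α → Prop)

def RelWalk (k : ℕ) (u v : α) : Prop :=
  ∃ c : ℕ → α, c 0 = u ∧ c k = v ∧ ∀ i < k, R (c i) (c (i + 1))

variable {R}

theorem relWalk_zero {u v : α} : RelWalk R 0 u v ↔ u = v :=
  ⟨fun ⟨c, hu, hv, _⟩ => hu ▸ hv, fun h => ⟨fun _ => u, rfl, h, by omega⟩⟩

theorem relWalk_succ {k : ℕ} {u v : α} :
    RelWalk R (k + 1) u v ↔ ∃ w, RelWalk R k u w ∧ R w v := by
  constructor
  · rintro ⟨c, hu, hv, hc⟩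
    exact ⟨c k, ⟨c, hu, rfl, fun i hi => hc i (by omega)⟩, hv ▸ hc k (by omega)⟩
  · rintro ⟨w, ⟨c, hu, hw, hc⟩, hwv⟩
    refine ⟨fun i => if i ≤ k then c i else v, by simp [hu], by simp, fun i hi => ?_⟩
    rcases Nat.lt_or_ge i k with hik | hik
    · simpa [hik.le, Nat.succ_le_of_lt hik] using hc i hik
    · obtain rfl : i = k := by omega
      simpa [hw] using hwv

variable (R) [DecidableRel R] (S : Type*) [Semiring S]

def relMatrix : Matrix α α S :=
  of fun u v => if R u v then 1 else 0

variable {R S}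

theorem relMatrix_apply (u v : α) : relMatrix R S u v = if R u v then 1 else 0 := rfl

variable [PartialOrder S] [IsOrderedRing S]

theorem relMatrix_apply_nonneg (u v : α) : 0 ≤ relMatrix R S u v := by
  rw [relMatrix_apply]; split <;> simp

variable [Fintype α] [DecidableEq α]

theorem relMatrix_pow_apply_nonneg (k : ℕ) (u v : α) : 0 ≤ (relMatrix R S ^ k) u v := by
  induction k generalizing v with
  | zero => rw [pow_zero, one_apply]; split <;> simp
  | succ k ih =>
    rw [pow_succ, mul_apply]
    exact Finset.sum_nonneg fun w _ => mul_nonneg (ih w) (relMatrix_apply_nonneg w v)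

variable [Nontrivial S]

theorem relMatrix_pow_apply_ne_zero_iff {k : ℕ} {u v : α} :
    (relMatrix R S ^ k) u v ≠ 0 ↔ RelWalk R k u v := by
  induction k generalizing v with
  | zero => rw [pow_zero, one_apply, relWalk_zero]; split <;> simp [*]
  | succ k ih =>
    rw [pow_succ, mul_apply, relWalk_succ, Ne, Finset.sum_eq_zero_iff_of_nonneg fun w _ =>
      mul_nonneg (relMatrix_pow_apply_nonneg k u w) (relMatrix_apply_nonneg w v)]
    simp [ih, relMatrix_apply, and_comm]

end RelMatrix

namespace WangTile

variable {p : ℕ}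

def ValidAt (B : Set (WangTile p)) (f : ℤ → ℤ → WangTile p) (i j : ℤ) : Prop :=
  f i j ∈ B ∧ (f i j).r = (f (i + 1) j).l ∧ (f i j).t = (f i (j + 1)).b

theorem isTiling_iff_forall_validAt {B : Set (WangTile p)} {f : ℤ → ℤ → WangTile p} :
    IsTiling B f ↔ ∀ i j, ValidAt B f i j := by
  simp only [IsTiling, ValidAt, forall_and]

variable {m : ℕ} {B : Finset (WangTile p)}

def ColumnsMatch (u v : ColB p m B) : Prop :=
  ∀ k, (u.1 k).r = (v.1 k).l

instance : DecidableRel (ColumnsMatch (m := m) (B := B)) :=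
  fun u v => inferInstanceAs (Decidable (∀ k, (u.1 k).r = (v.1 k).l))

theorem Vmat_eq_relMatrix : Vmat p m B = relMatrix ColumnsMatch ℝ := rfl

def _root_.IsTiling.column {f : ℤ → ℤ → WangTile p} (hf : IsTiling (↑B) f) (m : ℕ) (i : ℤ) :
    ColB p m B :=
  ⟨fun k => f i k, fun k => hf.1 i k, fun k l hkl => by
    simpa [show ((l : ℕ) : ℤ) = k + 1 by omega] using hf.2.2 i k⟩

theorem Vmat_pow_ne_zero_of_isTiling {f : ℤ → ℤ → WangTile p} (hf : IsTiling (↑B) f)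
    (m k : ℕ) : Vmat p m B ^ k ≠ 0 := by
  have walk : RelWalk ColumnsMatch k (hf.column m 0) (hf.column m k) :=
    ⟨fun i => hf.column m i, rfl, rfl, fun i _ t => hf.2.1 i t⟩
  intro h
  exact (relMatrix_pow_apply_ne_zero_iff (S := ℝ)).mpr walk
    (by rw [← Vmat_eq_relMatrix, h, Matrix.zero_apply])

theorem exists_validAt_box_of_Vmat_pow_ne_zero (N : ℕ)
    (h : Vmat p (2 * N + 2) B ^ (2 * N + 1) ≠ 0) :
    ∃ f : ℤ → ℤ → WangTile p, ∀ i j : ℤ, i.natAbs ≤ N → j.natAbs ≤ N → ValidAt (↑B) f i j := by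
  obtain ⟨u, v, huv⟩ : ∃ u v, (Vmat p (2 * N + 2) B ^ (2 * N + 1)) u v ≠ 0 := by
    by_contra! h'
    exact h (Matrix.ext h')
  obtain ⟨c, -, -, hc⟩ := relMatrix_pow_apply_ne_zero_iff.mp huv
  -- Rows are clamped only to make `f` total; on the box no clamping occurs.
  let f : ℤ → ℤ → WangTile p := fun i j =>
    (c (i + N).toNat).1 ⟨min (j + N).toNat (2 * N + 1), by omega⟩
  refine ⟨f, fun i j hi hj => ⟨(c _).2.1 _, ?_, ?_⟩⟩
  · have hcol : (i + 1 + N).toNat = (i + N).toNat + 1 := by omega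
    simp only [f, hcol]
    exact hc _ (by omega) _
  · exact (c _).2.2 _ _ (by simp only; omega)

theorem isClosed_setOf_validAt [TopologicalSpace (WangTile p)] [DiscreteTopology (WangTile p)]
    (B : Set (WangTile p)) (i j : ℤ) : IsClosed {f : ℤ → ℤ → WangTile p | ValidAt B f i j} :=
  (isClosed_discrete {x : WangTile p × WangTile p × WangTile p |
      x.1 ∈ B ∧ x.1.r = x.2.1.l ∧ x.1.t = x.2.2.b}).preimage
    (show Continuous fun f : ℤ → ℤ → WangTile p => (f i j, f (i + 1) j, f i (j + 1)) by fun_prop)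

theorem exists_isTiling_of_forall_validAt_box (B : Set (WangTile p))
    (h : ∀ N : ℕ, ∃ f : ℤ → ℤ → WangTile p,
      ∀ i j : ℤ, i.natAbs ≤ N → j.natAbs ≤ N → ValidAt B f i j) :
    ∃ f, IsTiling B f := by
  let : TopologicalSpace (WangTile p) := ⊥
  have : DiscreteTopology (WangTile p) := ⟨rfl⟩
  let box (N : ℕ) : Set (ℤ → ℤ → WangTile p) :=
    ⋂ (i : ℤ) (j : ℤ) (_ : i.natAbs ≤ N) (_ : j.natAbs ≤ N), {f | ValidAt B f i j}
  have box_closed (N : ℕ) : IsClosed (box N) :=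
    isClosed_iInter fun i => isClosed_iInter fun j => isClosed_iInter fun _ =>
      isClosed_iInter fun _ => isClosed_setOf_validAt B i j
  have box_antitone (N : ℕ) : box (N + 1) ⊆ box N := by
    simp only [box, Set.subset_def, Set.mem_iInter, Set.mem_ofPred_eq]
    exact fun f hf i j hi hj => hf i j (by omega) (by omega)
  have box_nonempty (N : ℕ) : (box N).Nonempty := by
    simpa [box, Set.Nonempty] using h N
  obtain ⟨f, hf⟩ := IsCompact.nonempty_iInter_of_sequence_nonempty_isCompact_isClosed
    box box_antitone box_nonempty (box_closed 0).isCompact box_closed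
  simp only [box, Set.mem_iInter, Set.mem_ofPred_eq] at hf
  exact ⟨f, isTiling_iff_forall_validAt.mpr fun i j =>
    hf (max i.natAbs j.natAbs) i j (le_max_left _ _) (le_max_right _ _)⟩

end WangTile

theorem no_tiling_iff_Vmat_nilpotent {p : ℕ} (B : Finset (WangTile p)) :
    (¬ ∃ f : ℤ → ℤ → WangTile p, IsTiling (↑B) f) ↔
      ∃ m : ℕ, 1 ≤ m ∧ ∃ k : ℕ, 1 ≤ k ∧ Vmat p m B ^ k = 0 := by
  constructor
  · intro no_tiling
    by_contra! not_nilpotent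
    exact no_tiling <| WangTile.exists_isTiling_of_forall_validAt_box _ fun N =>
      WangTile.exists_validAt_box_of_Vmat_pow_ne_zero N (not_nilpotent _ (by omega) _ (by omega))
  · rintro ⟨m, -, k, -, hk⟩ ⟨f, hf⟩
    exact WangTile.Vmat_pow_ne_zero_of_isTiling hf m k hk
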